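/- arXiv:1604.00845 — 3 statements merged into one kernel-verified Lean document; each statement's English description precedes it below -/
import Mathlib

section
/- Let Σ ∈ M_{d×d} (so that Σ is invertible over ℤ/nℤ), let a, q ∈ [n]^d, and let x ∈ ℂ^{[n]^d}. Then for every i ∈ [n]^d one has F^{-1}(P_{Σ,a,q} x̂)_{π_{Σ,q}(i)} = x_i · ω^{a^T Σ i}. -/
/- STATEMENT 0: For Σ ∈ M_{d×d} (odd determinant over ℤ/nℤ), a, q ∈ [n]^d and x ∈ ℂ^{[n]^d},
   for every i one has F^{-1}(P_{Σ,a,q} x̂)_{π_{Σ,q}(i)} = x_i · ω^{aᵀΣi}. -/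

open scoped BigOperators

/-- ω^t for t ∈ ℤ/nℤ, where ω = e^{2πi/n}. -/
noncomputable def fe (n : ℕ) (t : ZMod n) : ℂ :=
  Complex.exp (2 * (Real.pi : ℂ) * Complex.I * ((t.val : ℕ) : ℂ) / (n : ℂ))

/-- dot product in (ℤ/nℤ)^d -/
def fdot {n d : ℕ} (i j : Fin d → ZMod n) : ZMod n := ∑ s, i s * j s

/-- orthonormal d-dimensional DFT: x̂_j = N^{-1/2} Σ_i ω^{-iᵀj} x_i -/
noncomputable def fdft {n d : ℕ} [NeZero n] (x : (Fin d → ZMod n) → ℂ) :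
    (Fin d → ZMod n) → ℂ :=
  fun j => ((Real.sqrt ((n : ℝ) ^ d) : ℝ) : ℂ)⁻¹ * ∑ i, fe n (-(fdot i j)) * x i

/-- inverse orthonormal d-dimensional DFT: (F⁻¹y)_j = N^{-1/2} Σ_i ω^{iᵀj} y_i -/
noncomputable def fidft {n d : ℕ} [NeZero n] (y : (Fin d → ZMod n) → ℂ) :
    (Fin d → ZMod n) → ℂ :=
  fun j => ((Real.sqrt ((n : ℝ) ^ d) : ℝ) : ℂ)⁻¹ * ∑ i, fe n (fdot i j) * y i

/-- the pseudorandom spectrum permutation π_{Σ,q}(i) = Σ(i−q) -/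
def fperm {n d : ℕ} (M : Matrix (Fin d) (Fin d) (ZMod n)) (q : Fin d → ZMod n)
    (i : Fin d → ZMod n) : Fin d → ZMod n := M.mulVec (i - q)

/-- the operator P_{Σ,a,q}: (P ŷ)_i = ŷ_{Σᵀ(i−a)} · ω^{iᵀΣq} -/
noncomputable def fP {n d : ℕ} (M : Matrix (Fin d) (Fin d) (ZMod n))
    (a q : Fin d → ZMod n) (y : (Fin d → ZMod n) → ℂ) : (Fin d → ZMod n) → ℂ :=
  fun i => y (M.transpose.mulVec (i - a)) * fe n (fdot i (M.mulVec q))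

/-
P_{Σ,a,q} combines two symmetries of the Fourier transform. Multiplying a spectrum by the
character j ↦ ω^{jᵀΣq} translates its inverse transform by Σq, so evaluating at
π_{Σ,q}(i) = Σ(i − q) amounts to evaluating at Σi. The substitution j ↦ Σᵀ(j − a) is a
bijection of [n]^d, since an odd determinant is a unit modulo a power of 2, and
jᵀΣi = (Σᵀ(j − a))ᵀi + aᵀΣi; after reindexing, it only contributes the phase ω^{aᵀΣi}.
Fourier inversion then gives x_i.
-/

open Matrix

lemma fe_eq_stdAddChar {n : ℕ} [NeZero n] (t : ZMod n) : fe n t = ZMod.stdAddChar t := by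
  rw [ZMod.stdAddChar_apply, ZMod.toCircle_apply]
  rfl

lemma fe_add {n : ℕ} [NeZero n] (s t : ZMod n) : fe n (s + t) = fe n s * fe n t := by
  simp only [fe_eq_stdAddChar, AddChar.map_add_eq_mul]

lemma fdot_eq_dotProduct {n d : ℕ} (i j : Fin d → ZMod n) : fdot i j = i ⬝ᵥ j := rfl

noncomputable def fdotChar {n d : ℕ} [NeZero n] (c : Fin d → ZMod n) :
    AddChar (Fin d → ZMod n) ℂ :=
  ZMod.stdAddChar.compAddMonoidHom (AddMonoidHom.mk' (· ⬝ᵥ c) fun v w => add_dotProduct v w c)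

lemma fdotChar_apply {n d : ℕ} [NeZero n] (c j : Fin d → ZMod n) :
    fdotChar c j = fe n (fdot j c) := by
  rw [fe_eq_stdAddChar]
  rfl

lemma fdotChar_eq_zero_iff {n d : ℕ} [NeZero n] (c : Fin d → ZMod n) :
    fdotChar c = 0 ↔ c = 0 := by
  simp only [AddChar.eq_zero_iff, fdotChar_apply, fe_eq_stdAddChar, fdot_eq_dotProduct,
    ← (ZMod.stdAddChar (N := n)).map_zero_eq_one, ZMod.injective_stdAddChar.eq_iff,
    dotProduct_comm _ c, dotProduct_eq_zero_iff]

lemma sum_fe_fdot {n d : ℕ} [NeZero n] (c : Fin d → ZMod n) :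
    ∑ j, fe n (fdot j c) = if c = 0 then (n : ℂ) ^ d else 0 := by
  simp only [← fdotChar_apply, AddChar.sum_eq_ite, fdotChar_eq_zero_iff, Fintype.card_fun,
    ZMod.card, Fintype.card_fin, Nat.cast_pow]

lemma ofReal_sqrt_inv_mul_self {r : ℝ} (hr : 0 ≤ r) :
    ((√r : ℂ))⁻¹ * ((√r : ℂ))⁻¹ = ((r : ℂ))⁻¹ := by
  rw [← mul_inv, ← Complex.ofReal_mul, Real.mul_self_sqrt hr]

theorem fidft_fdft {n d : ℕ} [NeZero n] (x : (Fin d → ZMod n) → ℂ) (i : Fin d → ZMod n) :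
    fidft (fdft x) i = x i := by
  set C : ℂ := ((√((n : ℝ) ^ d) : ℝ) : ℂ)⁻¹
  have hphase (j k : Fin d → ZMod n) :
      fe n (fdot j i) * fe n (-fdot k j) = fe n (fdot j (i - k)) := by
    rw [← fe_add, fdot_eq_dotProduct, fdot_eq_dotProduct, fdot_eq_dotProduct, dotProduct_comm k,
      dotProduct_sub, sub_eq_add_neg]
  have horth : ∑ k, (∑ j, fe n (fdot j (i - k))) * x k = (n : ℂ) ^ d * x i := by
    simp only [sum_fe_fdot, sub_eq_zero, ite_mul, zero_mul, Finset.sum_ite_eq, Finset.mem_univ,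
      if_true]
  have hC : C * C * (n : ℂ) ^ d = 1 := by
    rw [ofReal_sqrt_inv_mul_self (by positivity)]
    push_cast
    exact inv_mul_cancel₀ (pow_ne_zero _ (Nat.cast_ne_zero.2 (NeZero.ne n)))
  calc fidft (fdft x) i = C * C * ∑ k, (∑ j, fe n (fdot j (i - k))) * x k := by
        simp only [fidft, fdft, Finset.mul_sum, Finset.sum_mul, ← hphase]
        rw [Finset.sum_comm]
        refine Finset.sum_congr rfl fun k _ => Finset.sum_congr rfl fun j _ => by ring
    _ = x i := by rw [horth, ← mul_assoc, hC, one_mul]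

lemma fidft_mul_fe_fdot {n d : ℕ} [NeZero n] (y : (Fin d → ZMod n) → ℂ)
    (b k : Fin d → ZMod n) :
    fidft (fun j => y j * fe n (fdot j b)) k = fidft y (k + b) := by
  simp only [fidft, fdot_eq_dotProduct, dotProduct_add, fe_add]
  congr 1
  exact Finset.sum_congr rfl fun j _ => by ring

lemma fidft_comp_transpose_mulVec_sub {n d : ℕ} [NeZero n] {M : Matrix (Fin d) (Fin d) (ZMod n)}
    (hM : IsUnit M.det) (y : (Fin d → ZMod n) → ℂ) (a k : Fin d → ZMod n) :
    fidft (fun j => y (Mᵀ *ᵥ (j - a))) (M *ᵥ k) = fe n (fdot a (M *ᵥ k)) * fidft y k := by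
  have hsubst : Function.Bijective fun j => Mᵀ *ᵥ (j - a) :=
    ((mulVec_surjective_iff_isUnit.2 ((isUnit_iff_isUnit_det _).2 (by rwa [det_transpose]))).comp
      (Equiv.subRight a).surjective).bijective_of_finite
  have hphase (j : Fin d → ZMod n) : fe n (fdot j (M *ᵥ k)) * y (Mᵀ *ᵥ (j - a)) =
      fe n (fdot a (M *ᵥ k)) * (fe n (fdot (Mᵀ *ᵥ (j - a)) k) * y (Mᵀ *ᵥ (j - a))) := by
    rw [← mul_assoc, ← fe_add, fdot_eq_dotProduct, fdot_eq_dotProduct, fdot_eq_dotProduct,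
      dotProduct_mulVec, dotProduct_mulVec, mulVec_transpose, ← add_dotProduct, ← add_vecMul,
      add_sub_cancel]
  simp only [fidft, hphase, ← Finset.mul_sum]
  rw [hsubst.sum_comp fun j => fe n (fdot j k) * y j]
  ring

lemma ZMod.isUnit_of_odd_val {m : ℕ} {u : ZMod (2 ^ m)} (hu : Odd u.val) : IsUnit u := by
  rw [← ZMod.natCast_zmod_val u, ZMod.isUnit_iff_coprime]
  exact hu.coprime_two_right.pow_right m

theorem stmt0_general {n d m : ℕ} [NeZero n] (hn : n = 2 ^ m)
    (M : Matrix (Fin d) (Fin d) (ZMod n)) (hM : Odd (Matrix.det M).val)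
    (a q : Fin d → ZMod n) (x : (Fin d → ZMod n) → ℂ) (i : Fin d → ZMod n) :
    fidft (fP M a q (fdft x)) (fperm M q i) = x i * fe n (fdot a (M.mulVec i)) := by
  have hdet : IsUnit M.det := by
    subst hn
    exact ZMod.isUnit_of_odd_val hM
  calc fidft (fP M a q (fdft x)) (fperm M q i)
      = fidft (fun j => fdft x (Mᵀ *ᵥ (j - a))) (M *ᵥ i) := by
        unfold fP fperm
        rw [fidft_mul_fe_fdot, ← mulVec_add, sub_add_cancel]
    _ = fe n (fdot a (M *ᵥ i)) * fidft (fdft x) i := fidft_comp_transpose_mulVec_sub hdet _ a i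
    _ = x i * fe n (fdot a (M.mulVec i)) := by rw [fidft_fdft, mul_comm]

theorem stmt0 {n d m : ℕ} [NeZero n] (hn : n = 2 ^ m) (hd : 1 ≤ d)
    (M : Matrix (Fin d) (Fin d) (ZMod n)) (hM : Odd (Matrix.det M).val)
    (a q : Fin d → ZMod n) (x : (Fin d → ZMod n) → ℂ) (i : Fin d → ZMod n) :
    fidft (fP M a q (fdft x)) (fperm M q i) = x i * fe n (fdot a (M.mulVec i)) :=
  stmt0_general hn M hM a q x i
end

section
/- Let x, z ∈ ℂ^n and let k ≤ n be a positive integer. Let S be a set of k coordinates of x of largest magnitude, and let T be a set of 2k coordinates of z of largest magnitude. Then ||x − z_T||_2² ≤ ||x − x_S||_2² + 4·||(x − z)_{S∪T}||_2². -/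
open Finset

/-!
Only the coordinates of `S' = S \ T` and `T' = T \ S` matter, and there `x` has to be compared
with `z`. Since `|T'| ≥ 2|S'|` and every `|z_j|`, `j ∈ T'`, dominates every `|z_i|`, `i ∈ S'`,
averaging gives `2‖z_{S'}‖² ≤ ‖z_{T'}‖²`. Weighted triangle inequalities
`|x_i|² ≤ 4|x_i - z_i|² + (4/3)|z_i|²` on `S'` and `(2/3)|z_j|² ≤ |x_j|² + 2|x_j - z_j|²` on `T'`
then chain into `‖x_{S'}‖² ≤ ‖x_{T'}‖² + 2‖(x - z)_{T'}‖² + 4‖(x - z)_{S'}‖²`.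
-/

lemma sq_le_weighted_of_le_add {c a b t : ℝ} (hc : 0 ≤ c) (h : c ≤ a + b) (ht : 0 < t) :
    c ^ 2 ≤ (1 + t) * a ^ 2 + (1 + t⁻¹) * b ^ 2 := by
  have hgap : (1 + t) * a ^ 2 + (1 + t⁻¹) * b ^ 2 - (a + b) ^ 2 = (t * a - b) ^ 2 / t := by
    field_simp
    ring
  have : 0 ≤ (t * a - b) ^ 2 / t := by positivity
  nlinarith [pow_le_pow_left₀ hc h 2]

section Averaging

variable {ι : Type*} {s t : Finset ι} {f : ι → ℝ}

lemma card_mul_sum_le_card_mul_sum (h : ∀ i ∈ s, ∀ j ∈ t, f i ≤ f j) :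
    #t * ∑ i ∈ s, f i ≤ #s * ∑ j ∈ t, f j :=
  calc (#t : ℝ) * ∑ i ∈ s, f i = ∑ i ∈ s, ∑ _j ∈ t, f i := by
        rw [mul_sum]; simp [sum_const, nsmul_eq_mul]
    _ ≤ ∑ _i ∈ s, ∑ j ∈ t, f j := sum_le_sum fun i hi => sum_le_sum fun j hj => h i hi j hj
    _ = #s * ∑ j ∈ t, f j := by rw [sum_const, nsmul_eq_mul]

lemma nat_mul_sum_le_sum_of_forall_le (c : ℕ) (hf : 0 ≤ f) (hcard : c * #s ≤ #t)
    (h : ∀ i ∈ s, ∀ j ∈ t, f i ≤ f j) :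
    c * ∑ i ∈ s, f i ≤ ∑ j ∈ t, f j := by
  rcases s.eq_empty_or_nonempty with rfl | hs
  · simpa using sum_nonneg fun j _ => hf j
  have hcard' : (c : ℝ) * #s ≤ #t := by exact_mod_cast hcard
  refine le_of_mul_le_mul_left ?_ (show (0 : ℝ) < #s by exact_mod_cast hs.card_pos)
  calc (#s : ℝ) * (c * ∑ i ∈ s, f i) = (c * #s) * ∑ i ∈ s, f i := by ring
    _ ≤ #t * ∑ i ∈ s, f i := by gcongr; exact sum_nonneg fun i _ => hf i
    _ ≤ #s * ∑ j ∈ t, f j := card_mul_sum_le_card_mul_sum h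

end Averaging

lemma nat_mul_card_sdiff_le_card_sdiff {α : Type*} [DecidableEq α] {s t : Finset α} {c : ℕ}
    (hc : 1 ≤ c) (hcard : c * #s ≤ #t) : c * #(s \ t) ≤ #(t \ s) := by
  have hs := card_sdiff_add_card_inter s t
  have ht := card_sdiff_add_card_inter t s
  rw [inter_comm] at ht
  nlinarith

lemma sum_norm_sub_ite_sq {ι E : Type*} [Fintype ι] [DecidableEq ι] [SeminormedAddCommGroup E]
    (s : Finset ι) (x z : ι → E) :
    ∑ i, ‖x i - if i ∈ s then z i else 0‖ ^ 2
      = ∑ i ∈ s, ‖x i - z i‖ ^ 2 + ∑ i ∈ sᶜ, ‖x i‖ ^ 2 := by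
  rw [← sum_add_sum_compl s]
  congr 1
  · exact sum_congr rfl fun i hi => by simp [hi]
  · exact sum_congr rfl fun i hi => by simp [mem_compl.1 hi]

lemma sum_norm_sq_le_of_two_mul_card_le {ι E : Type*} [SeminormedAddCommGroup E]
    {s t : Finset ι} (x z : ι → E) (hcard : 2 * #s ≤ #t)
    (hz : ∀ i ∈ s, ∀ j ∈ t, ‖z i‖ ≤ ‖z j‖) :
    ∑ i ∈ s, ‖x i‖ ^ 2
      ≤ ∑ j ∈ t, ‖x j‖ ^ 2 + 2 * ∑ j ∈ t, ‖x j - z j‖ ^ 2 + 4 * ∑ i ∈ s, ‖x i - z i‖ ^ 2 := by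
  have hx : ∑ i ∈ s, ‖x i‖ ^ 2 ≤ ∑ i ∈ s, (4 * ‖x i - z i‖ ^ 2 + 4 / 3 * ‖z i‖ ^ 2) := by
    refine sum_le_sum fun i _ => ?_
    have := sq_le_weighted_of_le_add (norm_nonneg _)
      ((norm_le_norm_add_norm_sub' (x i) (z i)).trans_eq (add_comm _ _))
      (show (0 : ℝ) < 3 by norm_num)
    norm_num at this ⊢
    linarith
  have hz_avg : 2 * ∑ i ∈ s, ‖z i‖ ^ 2 ≤ ∑ j ∈ t, ‖z j‖ ^ 2 := by
    exact_mod_cast nat_mul_sum_le_sum_of_forall_le 2 (fun i => sq_nonneg ‖z i‖) hcard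
      fun i hi j hj => pow_le_pow_left₀ (norm_nonneg _) (hz i hi j hj) 2
  have hzt : ∑ j ∈ t, ‖z j‖ ^ 2 ≤ ∑ j ∈ t, (3 / 2 * ‖x j‖ ^ 2 + 3 * ‖x j - z j‖ ^ 2) := by
    refine sum_le_sum fun j _ => ?_
    have := sq_le_weighted_of_le_add (norm_nonneg _) (norm_le_norm_add_norm_sub (x j) (z j))
      (show (0 : ℝ) < 1 / 2 by norm_num)
    norm_num at this ⊢
    linarith
  simp only [sum_add_distrib, ← mul_sum] at hx hzt
  linarith

theorem stmt12_general {n k : ℕ}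
    (x z : Fin n → ℂ) (S T : Finset (Fin n))
    (hS : S.card = k)
    (hT : T.card = 2 * k)
    (hTmax : ∀ i ∈ T, ∀ j ∉ T, ‖z j‖ ≤ ‖z i‖) :
    ∑ i, ‖x i - (if i ∈ T then z i else 0)‖ ^ 2
      ≤ ∑ i, ‖x i - (if i ∈ S then x i else 0)‖ ^ 2
        + 4 * ∑ i ∈ S ∪ T, ‖x i - z i‖ ^ 2 := by
  have hcard : 2 * #(S \ T) ≤ #(T \ S) :=
    nat_mul_card_sdiff_le_card_sdiff one_le_two (by omega)
  have key := sum_norm_sq_le_of_two_mul_card_le x z hcard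
    fun i hi j hj => hTmax j (mem_sdiff.1 hj).1 i (mem_sdiff.1 hi).2
  have hsub : ∑ i ∈ T \ S, ‖x i - z i‖ ^ 2 ≤ ∑ i ∈ T, ‖x i - z i‖ ^ 2 :=
    sum_le_sum_of_subset_of_nonneg sdiff_subset fun i _ _ => sq_nonneg _
  have hcompl := sum_sdiff_sub_sum_sdiff (s₁ := Sᶜ) (s₂ := Tᶜ) (f := fun i => ‖x i‖ ^ 2)
  rw [compl_sdiff_compl, compl_sdiff_compl] at hcompl
  rw [sum_norm_sub_ite_sq, sum_norm_sub_ite_sq, ← sdiff_union_self_eq_union,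
    sum_union sdiff_disjoint]
  simp only [sub_self, norm_zero, ne_eq, OfNat.ofNat_ne_zero, not_false_eq_true, zero_pow,
    sum_const_zero, zero_add]
  linarith [sum_nonneg fun i (_ : i ∈ T \ S) => sq_nonneg ‖x i - z i‖]

theorem stmt12 {n k : ℕ} (hk : 1 ≤ k) (hkn : k ≤ n)
    (x z : Fin n → ℂ) (S T : Finset (Fin n))
    (hS : S.card = k)
    (hSmax : ∀ i ∈ S, ∀ j ∉ S, ‖x j‖ ≤ ‖x i‖)
    (hT : T.card = 2 * k)
    (hTmax : ∀ i ∈ T, ∀ j ∉ T, ‖z j‖ ≤ ‖z i‖) :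
    ∑ i, ‖x i - (if i ∈ T then z i else 0)‖ ^ 2
      ≤ ∑ i, ‖x i - (if i ∈ S then x i else 0)‖ ^ 2
        + 4 * ∑ i ∈ S ∪ T, ‖x i - z i‖ ^ 2 :=
  stmt12_general x z S T hS hT hTmax
end

section
/- There is an absolute constant c > 0 such that the following holds. Let X₁,…,X_n ≥ 0 be independent real random variables with E[X_i] ≤ μ for every i, where μ > 0, let γ ∈ (0,1), and let Y := quant^γ(X₁,…,X_n). Then Pr[ Y ≥ 4μ/γ ] ≤ 2^{−c·γ·n}. -/
/- STATEMENT 14: There is an absolute constant c > 0 such that: if X₁,…,X_n ≥ 0 are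
   independent real random variables with E[X_i] ≤ μ for every i (μ > 0), γ ∈ (0,1), and
   Y := quant^γ(X₁,…,X_n) (the ⌈γn⌉-th largest), then Pr[Y ≥ 4μ/γ] ≤ 2^{−c·γ·n}. -/

open MeasureTheory ProbabilityTheory

/-- the k-th largest element (1-indexed) of the values u₀,…,u_{m−1} -/
noncomputable def kthLargest {m : ℕ} (u : Fin m → ℝ) (k : ℕ) : ℝ :=
  ((List.ofFn u).insertionSort (· ≤ ·)).getD (m - k) 0

/-- quant^f(u₁,…,u_m): the ⌈f·m⌉-th largest of the values -/
noncomputable def quant {m : ℕ} (f : ℝ) (u : Fin m → ℝ) : ℝ :=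
  kthLargest u ⌈f * m⌉₊

/-! By Markov's inequality each event `4μ/γ ≤ Xᵢ` has probability at most `γ/4`. If the
`k = ⌈γn⌉`-th largest value reaches `4μ/γ`, then `k` of these independent events occur, so a union
bound over `k`-subsets gives `C(n,k) (γ/4)^k ≤ (e/4)^k ≤ 2^{-k/2}`, i.e. `c = 1/2` works. -/

open Finset
open scoped ENNReal

lemma le_card_filter_of_le_kthLargest {m : ℕ} (u : Fin m → ℝ) {t : ℝ} {k : ℕ}
    (hk : 1 ≤ k) (hkm : k ≤ m) (h : t ≤ kthLargest u k) :
    k ≤ #{i | t ≤ u i} := by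
  set l := (List.ofFn u).insertionSort (· ≤ ·)
  have hlen : l.length = m := by simp [l]
  have hmk : m - k < l.length := by omega
  have hl : t ≤ l[m - k] := by
    rwa [kthLargest, List.getD_eq_getElem?_getD, List.getElem?_eq_getElem hmk] at h
  have hdrop : l.drop (m - k) = l[m - k] :: l.drop (m - k + 1) := List.drop_eq_getElem_cons hmk
  have htop : ∀ x ∈ l.drop (m - k), t ≤ x := by
    have hsorted := (List.pairwise_insertionSort (· ≤ ·) (List.ofFn u)).drop (i := m - k)
    rw [hdrop, List.pairwise_cons] at hsorted
    rw [hdrop]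
    rintro x (_ | ⟨_, hx⟩)
    exacts [hl, hl.trans (hsorted.1 x hx)]
  have hcount : #{i | t ≤ u i} = l.countP (fun x => decide (t ≤ x)) := by
    rw [(List.perm_insertionSort _ _).countP_eq, List.ofFn_eq_map, List.countP_map,
      List.countP_eq_length_filter, Fin.univ_def]
    rfl
  calc k = (l.drop (m - k)).countP (fun x => decide (t ≤ x)) := by
        rw [List.countP_eq_length.2 (by simpa using htop)]; simp [hlen]; omega
    _ ≤ #{i | t ≤ u i} := by
        rw [hcount]
        conv_rhs => rw [← List.take_append_drop (m - k) l, List.countP_append]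
        omega

lemma ProbabilityTheory.iIndepSet.measure_le_card_filter_mem_le {Ω ι : Type*}
    [MeasurableSpace Ω] [Fintype ι] {P : Measure Ω} {A : ι → Set Ω} [∀ i, DecidablePred (· ∈ A i)]
    (hA : iIndepSet A P) {p : ℝ≥0∞} (hp : ∀ i, P (A i) ≤ p) (k : ℕ) :
    P {ω | k ≤ #{i | ω ∈ A i}} ≤ (Fintype.card ι).choose k * p ^ k := by
  have hsub : {ω | k ≤ #{i | ω ∈ A i}} ⊆ ⋃ S ∈ powersetCard k univ, ⋂ i ∈ S, A i := by
    intro ω hω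
    obtain ⟨S, hS, rfl⟩ := exists_subset_card_eq hω
    exact Set.mem_biUnion (mem_powersetCard.2 ⟨subset_univ S, rfl⟩)
      (Set.mem_iInter₂.2 fun i hi => (mem_filter.1 (hS hi)).2)
  calc P {ω | k ≤ #{i | ω ∈ A i}}
      ≤ ∑ S ∈ powersetCard k univ, P (⋂ i ∈ S, A i) :=
        (measure_mono hsub).trans (measure_biUnion_finset_le _ _)
    _ = ∑ S ∈ powersetCard k univ, ∏ i ∈ S, P (A i) :=
        sum_congr rfl fun S _ => hA.meas_biInter S
    _ ≤ ∑ S ∈ powersetCard k (univ : Finset ι), p ^ k :=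
        sum_le_sum fun S hS => by
          rw [← (mem_powersetCard.1 hS).2, ← prod_const]
          exact prod_le_prod' fun i _ => hp i
    _ = (Fintype.card ι).choose k * p ^ k := by
        rw [sum_const, card_powersetCard, card_univ, nsmul_eq_mul]

lemma choose_mul_pow_le_exp {n k : ℕ} {x : ℝ} (hx : 0 ≤ x) (hxn : x * n ≤ k) :
    (n.choose k : ℝ) * x ^ k ≤ Real.exp k :=
  calc (n.choose k : ℝ) * x ^ k
      ≤ (n : ℝ) ^ k / k.factorial * x ^ k := by gcongr; exact Nat.choose_le_pow_div k n
    _ = (x * n) ^ k / k.factorial := by ring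
    _ ≤ (k : ℝ) ^ k / k.factorial := by gcongr
    _ ≤ Real.exp k := Real.pow_div_factorial_le_exp _ (Nat.cast_nonneg k) k

lemma exp_one_div_four_le_two_rpow : Real.exp 1 / 4 ≤ (2 : ℝ) ^ (-(1 / 2) : ℝ) := by
  have he := Real.exp_one_lt_d9
  calc Real.exp 1 / 4 ≤ √(2⁻¹) := by
        rw [Real.le_sqrt' (by positivity)]
        nlinarith [Real.exp_pos 1]
    _ = (2 : ℝ) ^ (-(1 / 2) : ℝ) := by
        rw [Real.sqrt_inv, Real.sqrt_eq_rpow, Real.rpow_neg zero_le_two]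

lemma choose_mul_div_four_pow_le {n k : ℕ} {γ : ℝ} (hγ : 0 ≤ γ) (hγk : γ * n ≤ k) :
    (n.choose k : ℝ) * (γ / 4) ^ k ≤ (2 : ℝ) ^ (-(1 / 2 * γ * n)) :=
  calc (n.choose k : ℝ) * (γ / 4) ^ k = (n.choose k * γ ^ k) / 4 ^ k := by
        rw [div_pow, mul_div_assoc]
    _ ≤ Real.exp k / 4 ^ k := by gcongr; exact choose_mul_pow_le_exp hγ hγk
    _ = (Real.exp 1 / 4) ^ k := by rw [div_pow, ← Real.exp_one_pow]
    _ ≤ ((2 : ℝ) ^ (-(1 / 2) : ℝ)) ^ k := by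
        gcongr; exact exp_one_div_four_le_two_rpow
    _ = (2 : ℝ) ^ (-(1 / 2) * k : ℝ) := by rw [← Real.rpow_mul_natCast zero_le_two]
    _ ≤ (2 : ℝ) ^ (-(1 / 2 * γ * n)) := by
        gcongr
        · norm_num
        · linarith

lemma measure_ge_le_ofReal_div {Ω : Type*} [MeasurableSpace Ω] {P : Measure Ω}
    [IsFiniteMeasure P] {f : Ω → ℝ} (hf : 0 ≤ᵐ[P] f) (hfi : Integrable f P) {t μ : ℝ}
    (ht : 0 < t) (hμ : ∫ ω, f ω ∂P ≤ μ) :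
    P {ω | t ≤ f ω} ≤ ENNReal.ofReal (μ / t) := by
  rw [← ofReal_measureReal, ENNReal.ofReal_le_ofReal_iff', le_div_iff₀' ht]
  exact Or.inl ((mul_meas_ge_le_integral_of_nonneg hf hfi t).trans hμ)

theorem stmt14 :
    ∃ c : ℝ, 0 < c ∧
      ∀ (Ω : Type) [MeasurableSpace Ω] (P : Measure Ω) [IsProbabilityMeasure P]
        (n : ℕ) (X : Fin n → Ω → ℝ) (μ γ : ℝ),
        0 < μ → γ ∈ Set.Ioo (0 : ℝ) 1 →
        (∀ i, Measurable (X i)) →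
        (∀ i ω, 0 ≤ X i ω) →
        iIndepFun X P →
        (∀ i, Integrable (X i) P) →
        (∀ i, ∫ ω, X i ω ∂P ≤ μ) →
        (P {ω | 4 * μ / γ ≤ quant γ (fun i => X i ω)}).toReal
          ≤ 2 ^ (-(c * γ * n)) := by
  refine ⟨1 / 2, one_half_pos, ?_⟩
  intro Ω _ P _ n X μ γ hμ ⟨hγ0, _⟩ hmeas hpos hInd hint hEX
  rcases n.eq_zero_or_pos with rfl | hn
  · exact measureReal_le_one.trans (by simp)
  set k := ⌈γ * n⌉₊
  have hγk : γ * n ≤ k := Nat.le_ceil _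
  have hk : 1 ≤ k := Nat.one_le_iff_ne_zero.2 (by positivity)
  have hkn : k ≤ n := Nat.ceil_le.2 (by nlinarith [(Nat.one_le_cast (α := ℝ)).2 hn])
  set A : Fin n → Set Ω := fun i => {ω | 4 * μ / γ ≤ X i ω}
  have hA : iIndepSet A P :=
    (iIndepSet_iff_meas_biInter fun i => hmeas i measurableSet_Ici).2 fun S =>
      hInd.meas_biInter fun i _ => ⟨Set.Ici (4 * μ / γ), measurableSet_Ici, rfl⟩
  have hMarkov : ∀ i, P (A i) ≤ ENNReal.ofReal (γ / 4) := fun i => by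
    convert measure_ge_le_ofReal_div (ae_of_all _ (hpos i)) (hint i) (t := 4 * μ / γ)
      (by positivity) (hEX i) using 2
    field_simp
  have hsub : {ω | 4 * μ / γ ≤ quant γ fun i => X i ω} ⊆ {ω | k ≤ #{i | ω ∈ A i}} :=
    fun ω hω => le_card_filter_of_le_kthLargest _ hk hkn hω
  have hP := (measure_mono hsub).trans (hA.measure_le_card_filter_mem_le hMarkov k)
  rw [Fintype.card_fin, ← ENNReal.ofReal_pow (by positivity), ← ENNReal.ofReal_natCast,
    ← ENNReal.ofReal_mul (by positivity)] at hP
  exact (ENNReal.toReal_le_of_le_ofReal (by positivity) hP).trans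
    (choose_mul_div_four_pow_le hγ0.le hγk)
end
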